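/- arXiv:1511.02650 — 3 statements merged into one kernel-verified Lean document; each statement's English description precedes it below -/
import Mathlib

section
/- Let D be a finite directed graph containing no directed cycle, let s and t be two distinct vertices of D, let k ∈ ℕ, and let F assign a natural number F(a) to every arc a of D such that flow conservation holds at every vertex other than s and t (outflow equals inflow), the net outflow at s (outflow minus inflow) equals k, and the net inflow at t equals k. Then there exist directed paths p_1, …, p_k in D, each from s to t, such that for every arc a of D, F(a) equals the number of indices i ∈ {1,…,k} for which a lies on p_i. -/
open Finset

set_option linter.unusedSectionVars false
set_option maxHeartbeats 1000000

section Helpers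
variable {α : Type*} [DecidableEq α]

private lemma chain_transGen {r : α → α → Prop} :
    ∀ {l : List α} {x y : α}, List.Chain r x l → y ∈ l → Relation.TransGen r x y := by
  intro l
  induction l with
  | nil => intro x y h hy; simp at hy
  | cons a l ih =>
    intro x y h hy
    rcases List.chain_cons.mp h with ⟨hxa, hal⟩
    rcases List.mem_cons.mp hy with rfl | hy
    · exact Relation.TransGen.single hxa
    · exact (Relation.TransGen.single hxa).trans (ih hal hy)

private lemma chain'_nodup {r : α → α → Prop}
    (hacyclic : ∀ x : α, ¬ Relation.TransGen r x x) :
    ∀ {l : List α}, List.Chain' r l → l.Nodup := by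
  intro l
  induction l with
  | nil => intro _; simp
  | cons a l ih =>
    intro h
    have hc : List.Chain r a l := h
    refine List.nodup_cons.mpr ⟨fun hmem => hacyclic a (chain_transGen hc hmem), ih h.tail⟩

private lemma chain'_zip {r : α → α → Prop} :
    ∀ {l : List α}, List.Chain' r l → ∀ {x y : α}, (x, y) ∈ l.zip l.tail → r x y := by
  intro l
  induction l with
  | nil => intro _ x y h; simp at h
  | cons a l ih =>
    intro h x y hxy
    cases l with
    | nil => simp at hxy
    | cons b m =>
      rcases List.mem_cons.mp hxy with heq | hxy'
      · obtain ⟨h1, h2⟩ := Prod.mk.injEq x y a b ▸ heq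
        subst h1; subst h2
        exact (List.isChain_cons_cons.mp h).1
      · exact ih (List.isChain_cons_cons.mp h).2 hxy'

private lemma zip_tail_nodup : ∀ {l : List α}, l.Nodup → (l.zip l.tail).Nodup := by
  intro l
  induction l with
  | nil => intro _; simp
  | cons a l ih =>
    intro h
    cases l with
    | nil => simp
    | cons b m =>
      have h' := List.nodup_cons.mp h
      refine List.nodup_cons.mpr ⟨?_, ih h'.2⟩
      intro hmem
      exact h'.1 (List.of_mem_zip hmem).1

private lemma cnt_fst (v : α) : ∀ {l : List α}, l.Nodup →
    ((l.zip l.tail).filter (fun a => a.1 = v)).length =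
      if v ∈ l.dropLast then 1 else 0 := by
  intro l
  induction l with
  | nil => intro _; simp
  | cons a l ih =>
    intro h
    cases l with
    | nil => simp
    | cons b m =>
      have h' := List.nodup_cons.mp h
      have key := ih h'.2
      rw [show ((a :: b :: m).zip (a :: b :: m).tail) = (a, b) :: ((b :: m).zip m) from rfl]
      rw [show (a :: b :: m).dropLast = a :: (b :: m).dropLast from rfl]
      rw [show ((b :: m).zip ((b :: m).tail)) = ((b :: m).zip m) from rfl] at key
      by_cases hav : a = v
      · subst hav
        have hnot : a ∉ (b :: m).dropLast := fun hm => h'.1 ((b :: m).dropLast_sublist.mem hm)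
        simp only [List.filter_cons, List.mem_cons]
        simp [key, hnot]
      · simp only [List.filter_cons, List.mem_cons]
        simp [key, hav, Ne.symm hav]

private lemma cnt_snd (v : α) : ∀ {l : List α}, l.Nodup →
    ((l.zip l.tail).filter (fun a => a.2 = v)).length =
      if v ∈ l.tail then 1 else 0 := by
  intro l
  induction l with
  | nil => intro _; simp
  | cons a l ih =>
    intro h
    cases l with
    | nil => simp
    | cons b m =>
      have h' := List.nodup_cons.mp h
      have h'' := List.nodup_cons.mp h'.2
      have key := ih h'.2
      rw [show ((a :: b :: m).zip (a :: b :: m).tail) = (a, b) :: ((b :: m).zip m) from rfl]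
      rw [show ((b :: m).zip ((b :: m).tail)) = ((b :: m).zip m) from rfl] at key
      rw [show (a :: b :: m).tail = b :: m from rfl]
      by_cases hbv : b = v
      · subst hbv
        have hbm : b ∉ m := h''.1
        rw [show (b :: m).tail = m from rfl] at key
        simp only [List.filter_cons, List.mem_cons]
        simp [key, hbm]
      · rw [show (b :: m).tail = m from rfl] at key
        simp only [List.filter_cons, List.mem_cons]
        simp [key, hbv, Ne.symm hbv]

private lemma mem_dropLast_iff {t : α} : ∀ {l : List α}, l.Nodup → l.getLast? = some t →
    ∀ v, (v ∈ l.dropLast ↔ v ∈ l ∧ v ≠ t) := by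
  intro l
  induction l with
  | nil => intro _ h; simp at h
  | cons a l ih =>
    intro h hlast v
    cases l with
    | nil =>
      simp only [List.getLast?_singleton, Option.some.injEq] at hlast
      subst hlast
      simp
    | cons b m =>
      have h' := List.nodup_cons.mp h
      have hlast' : (b :: m).getLast? = some t := by
        rwa [List.getLast?_cons_cons] at hlast
      have key := ih h'.2 hlast'
      have htmem : t ∈ b :: m := List.mem_of_mem_getLast? (by simp [hlast'])
      rw [show (a :: b :: m).dropLast = a :: (b :: m).dropLast from rfl]
      simp only [List.mem_cons] at *
      constructor
      · rintro (rfl | hv)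
        · exact ⟨Or.inl rfl, fun hvt => h'.1 (hvt ▸ htmem)⟩
        · obtain ⟨h1, h2⟩ := (key v).mp hv
          exact ⟨Or.inr h1, h2⟩
      · rintro ⟨rfl | hv, hvt⟩
        · exact Or.inl rfl
        · exact Or.inr ((key v).mpr ⟨hv, hvt⟩)

private lemma card_eq_length {β : Type*} [DecidableEq β] (l : List β) (hnd : l.Nodup)
    (S : Finset β) (h : ∀ x, x ∈ S ↔ x ∈ l) : S.card = l.length := by
  rw [← List.toFinset_card_of_nodup hnd]
  congr 1
  ext x
  simp [h]

end Helpers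

private lemma flow_main {α : Type*} [Fintype α] [DecidableEq α]
    (A : Finset (α × α)) (s t : α) (hst : s ≠ t)
    (hacyclic : ∀ x : α, ¬ Relation.TransGen (fun u v => (u, v) ∈ A) x x) :
    ∀ (k : ℕ) (F : α × α → ℕ),
    (∀ v : α, v ≠ s → v ≠ t →
      ∑ a ∈ A.filter (fun a => a.1 = v), F a = ∑ a ∈ A.filter (fun a => a.2 = v), F a) →
    (∑ a ∈ A.filter (fun a => a.1 = s), F a = ∑ a ∈ A.filter (fun a => a.2 = s), F a + k) →
    (∑ a ∈ A.filter (fun a => a.2 = t), F a = ∑ a ∈ A.filter (fun a => a.1 = t), F a + k) →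
    ∃ p : Fin k → List α,
      (∀ i : Fin k, (p i).Chain' (fun u v => (u, v) ∈ A) ∧
        (p i).head? = some s ∧ (p i).getLast? = some t) ∧
      ∀ a ∈ A, F a =
        (Finset.univ.filter (fun i : Fin k => a ∈ (p i).zip (p i).tail)).card := by
  have hwf : WellFounded (fun w v : α => (v, w) ∈ A) := by
    letI h1 : IsTrans α (fun a b : α => Relation.TransGen (fun u v : α => (u, v) ∈ A) b a) :=
      ⟨fun a b c h1 h2 => h2.trans h1⟩
    letI h2 : IsIrrefl α (fun a b : α => Relation.TransGen (fun u v : α => (u, v) ∈ A) b a) :=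
      ⟨hacyclic⟩
    exact Subrelation.wf (fun h => Relation.TransGen.single h)
      (Finite.wellFounded_of_trans_of_irrefl
        (fun a b : α => Relation.TransGen (fun u v : α => (u, v) ∈ A) b a))
  intro k
  induction k with
  | zero =>
    intro F hcons hs ht
    have hzero : ∀ v : α, ∑ a ∈ A.filter (fun a => a.1 = v), F a = 0 := by
      refine fun v => hwf.induction
        (C := fun v => ∑ a ∈ A.filter (fun a => a.1 = v), F a = 0) v ?_
      intro v ih
      by_contra hpos
      obtain ⟨⟨u, w⟩, ha, hFa⟩ := Finset.exists_ne_zero_of_sum_ne_zero hpos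
      obtain ⟨haA, hav⟩ := Finset.mem_filter.mp ha
      have hav' : u = v := hav
      rw [hav'] at haA hFa
      have hin : 0 < ∑ b ∈ A.filter (fun b => b.2 = w), F b :=
        lt_of_lt_of_le (Nat.pos_of_ne_zero hFa)
          (Finset.single_le_sum (fun i _ => Nat.zero_le _)
            (Finset.mem_filter.mpr ⟨haA, rfl⟩))
      have hout : 0 < ∑ b ∈ A.filter (fun b => b.1 = w), F b := by
        rcases eq_or_ne w s with rfl | hws
        · omega
        rcases eq_or_ne w t with rfl | hwt
        · omega
        · rw [hcons w hws hwt]; exact hin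
      exact absurd (ih w haA) (by omega)
    refine ⟨fun i => i.elim0, fun i => i.elim0, ?_⟩
    intro a haA
    have h1 : F a ≤ ∑ b ∈ A.filter (fun b => b.1 = a.1), F b :=
      Finset.single_le_sum (fun i _ => Nat.zero_le _) (Finset.mem_filter.mpr ⟨haA, rfl⟩)
    rw [hzero a.1] at h1
    simp [Nat.le_zero.mp h1]
  | succ k IH =>
    intro F hcons hs ht
    have extract : ∀ v : α, v ≠ t → 0 < ∑ a ∈ A.filter (fun a => a.1 = v), F a →
        ∃ l : List α, List.Chain (fun u w => (u, w) ∈ A ∧ 0 < F (u, w)) v l ∧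
          (v :: l).getLast? = some t := by
      refine fun v => hwf.induction
        (C := fun v => v ≠ t → 0 < ∑ a ∈ A.filter (fun a => a.1 = v), F a →
          ∃ l : List α, List.Chain (fun u w => (u, w) ∈ A ∧ 0 < F (u, w)) v l ∧
            (v :: l).getLast? = some t) v ?_
      rintro v ih hvt hpos
      obtain ⟨⟨u, w⟩, ha, hFa⟩ :=
        Finset.exists_ne_zero_of_sum_ne_zero (Nat.pos_iff_ne_zero.mp hpos)
      obtain ⟨haA, hav⟩ := Finset.mem_filter.mp ha
      have hav' : u = v := hav
      rw [hav'] at haA hFa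
      have hFvw : 0 < F (v, w) := Nat.pos_of_ne_zero hFa
      rcases eq_or_ne w t with rfl | hwt
      · exact ⟨[w], List.chain_cons.mpr ⟨⟨haA, hFvw⟩, List.Chain.nil⟩, by simp⟩
      · have hinw : 0 < ∑ a ∈ A.filter (fun a => a.2 = w), F a :=
          lt_of_lt_of_le hFvw (Finset.single_le_sum (fun i _ => Nat.zero_le _)
            (Finset.mem_filter.mpr ⟨haA, rfl⟩))
        have houtw : 0 < ∑ a ∈ A.filter (fun a => a.1 = w), F a := by
          rcases eq_or_ne w s with rfl | hws
          · omega
          · rw [hcons w hws hwt]; exact hinw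
        obtain ⟨l, hl, hll⟩ := ih w haA hwt houtw
        exact ⟨w :: l, List.chain_cons.mpr ⟨⟨haA, hFvw⟩, hl⟩,
          by rw [List.getLast?_cons_cons]; exact hll⟩
    have hsout : 0 < ∑ a ∈ A.filter (fun a => a.1 = s), F a := by omega
    obtain ⟨l, hchain, hlast⟩ := extract s hst hsout
    have hchain' : List.Chain' (fun u w => (u, w) ∈ A ∧ 0 < F (u, w)) (s :: l) := hchain
    have hacyclic' : ∀ x, ¬ Relation.TransGen (fun u w => (u, w) ∈ A ∧ 0 < F (u, w)) x x :=
      fun x h => hacyclic x (Relation.TransGen.mono (r := fun u w => (u, w) ∈ A ∧ 0 < F (u, w))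
        (p := fun u v => (u, v) ∈ A) (fun u w hw => hw.1) x x h)
    have hnd : (s :: l).Nodup := chain'_nodup hacyclic' hchain'
    have hlsub := List.nodup_cons.mp hnd
    set p₀ : List α := s :: l with hp₀
    set zipL : List (α × α) := p₀.zip p₀.tail with hzipL
    have hzsub : ∀ x ∈ zipL, x ∈ A := by
      intro x hx
      obtain ⟨x1, x2⟩ := x
      exact (chain'_zip hchain' hx).1
    have hzpos : ∀ x ∈ zipL, 0 < F x := by
      intro x hx
      obtain ⟨x1, x2⟩ := x
      exact (chain'_zip hchain' hx).2
    have hznd : zipL.Nodup := zip_tail_nodup hnd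
    set F' : α × α → ℕ := fun a => F a - (if a ∈ zipL then 1 else 0) with hF'
    have hsplit : ∀ a, F a = F' a + (if a ∈ zipL then 1 else 0) := by
      intro a
      by_cases h : a ∈ zipL
      · have := hzpos a h
        simp only [hF', h, if_true]
        omega
      · simp [hF', h]
    have hsum_out : ∀ v : α, ∑ a ∈ A.filter (fun a => a.1 = v), F a =
        (∑ a ∈ A.filter (fun a => a.1 = v), F' a) + (if v ∈ p₀.dropLast then 1 else 0) := by
      intro v
      have h1 : ∑ a ∈ A.filter (fun a => a.1 = v), F a =
          (∑ a ∈ A.filter (fun a => a.1 = v), F' a) +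
            ∑ a ∈ A.filter (fun a => a.1 = v), (if a ∈ zipL then 1 else 0) := by
        rw [← Finset.sum_add_distrib]
        exact Finset.sum_congr rfl fun a _ => hsplit a
      rw [h1, ← Finset.card_filter, ← cnt_fst v hnd]
      congr 1
      exact card_eq_length _ (hznd.filter _) _ (by
        intro x
        simp only [Finset.mem_filter, List.mem_filter, decide_eq_true_eq]
        constructor
        · rintro ⟨⟨hxA, hxg⟩, hxz⟩; exact ⟨hxz, hxg⟩
        · rintro ⟨hxz, hxg⟩; exact ⟨⟨hzsub x hxz, hxg⟩, hxz⟩)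
    have hsum_in : ∀ v : α, ∑ a ∈ A.filter (fun a => a.2 = v), F a =
        (∑ a ∈ A.filter (fun a => a.2 = v), F' a) + (if v ∈ p₀.tail then 1 else 0) := by
      intro v
      have h1 : ∑ a ∈ A.filter (fun a => a.2 = v), F a =
          (∑ a ∈ A.filter (fun a => a.2 = v), F' a) +
            ∑ a ∈ A.filter (fun a => a.2 = v), (if a ∈ zipL then 1 else 0) := by
        rw [← Finset.sum_add_distrib]
        exact Finset.sum_congr rfl fun a _ => hsplit a
      rw [h1, ← Finset.card_filter, ← cnt_snd v hnd]
      congr 1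
      exact card_eq_length _ (hznd.filter _) _ (by
        intro x
        simp only [Finset.mem_filter, List.mem_filter, decide_eq_true_eq]
        constructor
        · rintro ⟨⟨hxA, hxg⟩, hxz⟩; exact ⟨hxz, hxg⟩
        · rintro ⟨hxz, hxg⟩; exact ⟨⟨hzsub x hxz, hxg⟩, hxz⟩)
    have hDrop := mem_dropLast_iff hnd hlast
    have hTail : ∀ v, v ∈ p₀.tail ↔ v ∈ p₀ ∧ v ≠ s := by
      intro v
      rw [hp₀]
      simp only [List.tail_cons, List.mem_cons]
      constructor
      · intro hv
        exact ⟨Or.inr hv, fun hvs => hlsub.1 (hvs ▸ hv)⟩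
      · rintro ⟨rfl | hv, hvs⟩
        · exact absurd rfl hvs
        · exact hv
    have hsmem : s ∈ p₀ := by rw [hp₀]; exact List.mem_cons_self
    have htmem : t ∈ p₀ := List.mem_of_mem_getLast? (by simp [hlast])
    have hcons' : ∀ v : α, v ≠ s → v ≠ t →
        ∑ a ∈ A.filter (fun a => a.1 = v), F' a = ∑ a ∈ A.filter (fun a => a.2 = v), F' a := by
      intro v hvs hvt
      have h1 := hsum_out v
      have h2 := hsum_in v
      have heq : (if v ∈ p₀.dropLast then 1 else 0) = (if v ∈ p₀.tail then 1 else 0) := by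
        have hiff : v ∈ p₀.dropLast ↔ v ∈ p₀.tail := by
          rw [hDrop v, hTail v]
          constructor
          · rintro ⟨hv, _⟩; exact ⟨hv, hvs⟩
          · rintro ⟨hv, _⟩; exact ⟨hv, hvt⟩
        simp only [hiff]
      have h3 := hcons v hvs hvt
      omega
    have hs' : ∑ a ∈ A.filter (fun a => a.1 = s), F' a =
        ∑ a ∈ A.filter (fun a => a.2 = s), F' a + k := by
      have h1 := hsum_out s
      have h2 := hsum_in s
      have e1 : (if s ∈ p₀.dropLast then 1 else 0) = 1 := by
        simp [hDrop s, hsmem, hst]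
      have e2 : (if s ∈ p₀.tail then 1 else 0) = 0 := by
        simp [hTail s]
      rw [e1] at h1
      rw [e2] at h2
      omega
    have ht' : ∑ a ∈ A.filter (fun a => a.2 = t), F' a =
        ∑ a ∈ A.filter (fun a => a.1 = t), F' a + k := by
      have h1 := hsum_out t
      have h2 := hsum_in t
      have e1 : (if t ∈ p₀.dropLast then 1 else 0) = 0 := by
        simp [hDrop t]
      have e2 : (if t ∈ p₀.tail then 1 else 0) = 1 := by
        simp [hTail t, htmem, Ne.symm hst]
      rw [e1] at h1
      rw [e2] at h2
      omega
    obtain ⟨p', hp'path, hp'cnt⟩ := IH F' hcons' hs' ht'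
    refine ⟨Fin.cases p₀ p', ?_, ?_⟩
    · intro i
      refine Fin.cases ?_ ?_ i
      · simp only [Fin.cases_zero]
        refine ⟨List.IsChain.imp (fun u w hw => hw.1) hchain', ?_, hlast⟩
        rw [hp₀]
        rfl
      · intro j
        simp only [Fin.cases_succ]
        exact hp'path j
    · intro a haA
      have hcard := hp'cnt a haA
      rw [Finset.card_filter] at hcard ⊢
      rw [Fin.sum_univ_succ]
      simp only [Fin.cases_zero, Fin.cases_succ]
      simp only [hsplit a, hcard, hzipL]
      exact Nat.add_comm _ _

/-- **Flow decomposition in a finite acyclic digraph.**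
Let `D` be a finite directed graph with arc set `A` and no directed cycle,
let `s ≠ t` be vertices, `k ∈ ℕ`, and let `F` be a nonnegative integer flow
with conservation at every vertex other than `s` and `t`, net outflow `k`
at `s` and net inflow `k` at `t`.  Then `F` decomposes into `k` directed
paths from `s` to `t`: for every arc `a`, `F a` equals the number of
indices `i` such that `a` lies on the `i`-th path. -/
theorem flow_decomposes_into_paths
    {α : Type*} [Fintype α] [DecidableEq α]
    (A : Finset (α × α)) (s t : α) (hst : s ≠ t) (k : ℕ) (F : α × α → ℕ)
    (hacyclic : ∀ x : α, ¬ Relation.TransGen (fun u v => (u, v) ∈ A) x x)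
    (hcons : ∀ v : α, v ≠ s → v ≠ t →
      ∑ a ∈ A.filter (fun a => a.1 = v), F a =
        ∑ a ∈ A.filter (fun a => a.2 = v), F a)
    (hs : ∑ a ∈ A.filter (fun a => a.1 = s), F a =
      ∑ a ∈ A.filter (fun a => a.2 = s), F a + k)
    (ht : ∑ a ∈ A.filter (fun a => a.2 = t), F a =
      ∑ a ∈ A.filter (fun a => a.1 = t), F a + k) :
    ∃ p : Fin k → List α,
      (∀ i : Fin k, (p i).Chain' (fun u v => (u, v) ∈ A) ∧
        (p i).head? = some s ∧ (p i).getLast? = some t) ∧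
      ∀ a ∈ A, F a =
        (Finset.univ.filter (fun i : Fin k => a ∈ (p i).zip (p i).tail)).card := by
  exact flow_main A s t hst hacyclic k F hcons hs ht
end

section
/- Let D be a finite directed graph and let F assign a natural number F(a) to every arc a of D such that flow conservation holds at every vertex (outflow of F equals inflow of F). Then there exists a finite multiset of directed cycles of D such that for every arc a, F(a) equals the number of cycles in the multiset (counted with multiplicity) that contain a. -/
open Finset

/-- A directed cycle in the digraph with arc set `A`, given as the list of its
vertices `[v₁, …, vₘ, v₁]` returning to its starting vertex: consecutive
vertices are joined by arcs and no vertex other than the start/end is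
repeated. -/
def IsCycleIn {α : Type*} [DecidableEq α] (A : Finset (α × α)) (c : List α) : Prop :=
  2 ≤ c.length ∧ c.Chain' (fun u v => (u, v) ∈ A) ∧
    c.head? = c.getLast? ∧ c.dropLast.Nodup

/- ### Auxiliary lemmas -/

lemma mapFstZipTail {α : Type*} : ∀ (c : List α), (c.zip c.tail).map Prod.fst = c.dropLast
  | [] => rfl
  | [_] => rfl
  | x :: y :: t => by
      have ih := mapFstZipTail (y :: t)
      simp only [List.tail_cons, List.zip_cons_cons, List.map_cons] at ih ⊢
      rw [ih]
      rfl

lemma chainZipMem {α : Type*} {r : α → α → Prop} :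
    ∀ {c : List α}, c.Chain' r → ∀ p ∈ c.zip c.tail, r p.1 p.2
  | [], _, p, hp => by simp at hp
  | [_], _, p, hp => by simp at hp
  | x :: y :: t, h, p, hp => by
      rw [show List.Chain' r (x :: y :: t) ↔ _ from List.isChain_cons_cons] at h
      simp only [List.tail_cons, List.zip_cons_cons, List.mem_cons] at hp
      rcases hp with rfl | hp
      · exact h.1
      · exact chainZipMem h.2 p hp

lemma countDropLastTail {α : Type*} [DecidableEq α] (c : List α)
    (h : c.head? = c.getLast?) (v : α) : c.dropLast.count v = c.tail.count v := by
  rcases c with _ | ⟨x, t⟩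
  · rfl
  rcases t with _ | ⟨y, s⟩
  · rfl
  have hne : (x :: y :: s : List α) ≠ [] := by simp
  have hx : (x :: y :: s).getLast hne = x := by
    have h2 : (x :: y :: s).getLast? = some ((x :: y :: s).getLast hne) :=
      List.getLast?_eq_getLast hne
    have h3 : some x = some ((x :: y :: s).getLast hne) := by
      rw [← h2, ← h]; rfl
    exact (Option.some_injective _ h3).symm
  have hdecomp : (x :: y :: s) = (x :: y :: s).dropLast ++ [x] := by
    conv_lhs => rw [← List.dropLast_concat_getLast hne]
    rw [hx]
  have h1 : (x :: y :: s).count v = (x :: y :: s).dropLast.count v + [x].count v := by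
    conv_lhs => rw [hdecomp]
    rw [List.count_append]
  have h2 : (x :: y :: s).count v = [x].count v + (y :: s).count v := by
    rw [show (x :: y :: s : List α) = [x] ++ (y :: s) from rfl, List.count_append]
  simp only [List.dropLast_cons₂, List.tail_cons]
  have h3 : ((x :: y :: s).dropLast : List α) = x :: (y :: s).dropLast := rfl
  rw [h3] at h1
  omega

lemma sumIndicator {β : Type*} [DecidableEq β] (S : Finset β) (p : β → Prop) [DecidablePred p]
    (E : List β) (hn : E.Nodup) (hE : ∀ a ∈ E, a ∈ S) :
    ∑ a ∈ S.filter p, (if a ∈ E then 1 else 0) = E.countP (fun a => decide (p a)) := by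
  have h1 : (S.filter p).filter (fun a => a ∈ E) = (E.filter (fun a => decide (p a))).toFinset := by
    ext a
    simp only [Finset.mem_filter, List.mem_toFinset, List.mem_filter, decide_eq_true_eq]
    constructor
    · rintro ⟨⟨_, hpa⟩, hae⟩; exact ⟨hae, hpa⟩
    · rintro ⟨hae, hpa⟩; exact ⟨⟨hE a hae, hpa⟩, hae⟩
  rw [Finset.sum_boole, Nat.cast_id, h1, List.toFinset_card_of_nodup (hn.filter _), List.countP_eq_length_filter]

private noncomputable def walkAux {α : Type*} (P : Finset (α × α))
    (hstep : ∀ p ∈ P, ∃ w, (p.2, w) ∈ P) (a0 : {p : α × α // p ∈ P}) :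
    ℕ → {p : α × α // p ∈ P}
  | 0 => a0
  | n + 1 =>
      let q := walkAux P hstep a0 n
      ⟨(q.1.2, Classical.choose (hstep q.1 q.2)), Classical.choose_spec (hstep q.1 q.2)⟩

lemma existsCycle {α : Type*} [Fintype α] [DecidableEq α] (P : Finset (α × α))
    (hstep : ∀ p ∈ P, ∃ w, (p.2, w) ∈ P) (a0 : α × α) (ha0 : a0 ∈ P) :
    ∃ c : List α, 2 ≤ c.length ∧ c.Chain' (fun u v => (u, v) ∈ P) ∧
      c.head? = c.getLast? ∧ c.dropLast.Nodup := by
  classical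
  set f : ℕ → {p : α × α // p ∈ P} := walkAux P hstep ⟨a0, ha0⟩ with hf
  set w : ℕ → α := fun n => (f n).1.1 with hwdef
  have hw : ∀ n, (w n, w (n + 1)) ∈ P := by
    intro n
    have h1 : w (n + 1) = (f n).1.2 := rfl
    have h2 : (w n, w (n + 1)) = (f n).1 := by
      rw [h1, hwdef]
    rw [h2]
    exact (f n).2
  -- pigeonhole
  have hcard : Fintype.card α < Fintype.card (Fin (Fintype.card α + 1)) := by simp
  obtain ⟨i, j, hne, heq⟩ :=
    Fintype.exists_ne_map_eq_of_card_lt (fun i : Fin (Fintype.card α + 1) => w i) hcard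
  have hrep : ∃ n, ∃ i < n, w i = w n := by
    rcases lt_or_gt_of_ne (fun h : (i : ℕ) = j => hne (Fin.ext h)) with h | h
    · exact ⟨j, i, h, heq⟩
    · exact ⟨i, j, h, heq.symm⟩
  set j0 := Nat.find hrep with hj0
  obtain ⟨i0, hi0, hww⟩ := Nat.find_spec hrep
  have hmin : ∀ p q, p < q → q < j0 → w p ≠ w q :=
    fun p q hpq hq hwpq => Nat.find_min hrep hq ⟨p, hpq, hwpq⟩
  set n := j0 - i0 with hn
  have hn1 : 1 ≤ n := by omega
  set g : ℕ → α := fun k => w (i0 + k) with hg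
  refine ⟨(List.range (n + 1)).map g, ?_, ?_, ?_, ?_⟩
  · simpa using hn1
  · rw [show List.Chain' (fun u v => (u, v) ∈ P) ((List.range (n + 1)).map g) ↔ _ from List.isChain_map g]
    rw [show n + 1 = n.succ from rfl, List.isChain_range_succ]
    intro m hm
    show (w (i0 + m), w (i0 + m.succ)) ∈ P
    rw [Nat.add_succ]
    exact hw (i0 + m)
  · have hconcat : (List.range (n + 1)).map g = (List.range n).map g ++ [g n] := by
      rw [List.range_succ, List.map_append, List.map_singleton]
    rw [hconcat, List.getLast?_concat]
    have hh : ((List.range n).map g ++ [g n]).head? = some (g 0) := by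
      rw [← hconcat]
      rw [List.head?_map, List.head?_range]
      simp [Nat.succ_ne_zero]
    rw [hh]
    have : g n = g 0 := by
      show w (i0 + n) = w (i0 + 0)
      rw [show i0 + n = j0 by omega, show i0 + 0 = i0 from rfl]
      exact hww.symm
    rw [this]
  · have hconcat : (List.range (n + 1)).map g = (List.range n).map g ++ [g n] := by
      rw [List.range_succ, List.map_append, List.map_singleton]
    rw [hconcat, List.dropLast_concat]
    refine List.Nodup.map_on ?_ (List.nodup_range (n := n))
    intro a ha b hb hab
    rw [List.mem_range] at ha hb
    rcases lt_trichotomy a b with h | h | h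
    · exact absurd hab (hmin (i0 + a) (i0 + b) (by omega) (by omega))
    · exact h
    · exact absurd hab.symm (hmin (i0 + b) (i0 + a) (by omega) (by omega))

lemma circAux {α : Type*} [Fintype α] [DecidableEq α] (A : Finset (α × α)) :
    ∀ (N : ℕ) (F : α × α → ℕ), ∑ a ∈ A, F a = N →
    (∀ v : α, ∑ a ∈ A.filter (fun a => a.1 = v), F a =
        ∑ a ∈ A.filter (fun a => a.2 = v), F a) →
    ∃ M : Multiset (List α),
      (∀ c ∈ M, IsCycleIn A c) ∧
      ∀ a ∈ A, F a = (M.map (fun c => if a ∈ c.zip c.tail then 1 else 0)).sum := by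
  intro N
  induction N using Nat.strong_induction_on with
  | _ N ih =>
    intro F hN hcons
    by_cases hz : ∀ a ∈ A, F a = 0
    · exact ⟨0, by simp, fun a ha => by simp [hz a ha]⟩
    · push_neg at hz
      obtain ⟨a0, ha0A, ha0⟩ := hz
      set P := A.filter (fun a => 0 < F a) with hP
      have hPA : ∀ p ∈ P, p ∈ A := fun p hp => (mem_filter.mp hp).1
      have hPF : ∀ p ∈ P, 0 < F p := fun p hp => (mem_filter.mp hp).2
      have hstep : ∀ p ∈ P, ∃ w, (p.2, w) ∈ P := by
        intro p hp
        obtain ⟨hpA, hpF⟩ := mem_filter.mp hp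
        have hin : 0 < ∑ a ∈ A.filter (fun a => a.2 = p.2), F a :=
          lt_of_lt_of_le hpF
            (single_le_sum (fun i _ => Nat.zero_le _) (mem_filter.mpr ⟨hpA, rfl⟩))
        have hout : ∑ a ∈ A.filter (fun a => a.1 = p.2), F a ≠ 0 := by
          rw [hcons]; omega
        obtain ⟨b, hb, hbF⟩ := exists_ne_zero_of_sum_ne_zero hout
        obtain ⟨hbA, hb1⟩ := mem_filter.mp hb
        refine ⟨b.2, ?_⟩
        have hbeq : (p.2, b.2) = b := by rw [← hb1]
        rw [hbeq]
        exact mem_filter.mpr ⟨hbA, Nat.pos_of_ne_zero hbF⟩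
      obtain ⟨c, hlen, hchain, hcyc, hnd⟩ :=
        existsCycle P hstep a0 (mem_filter.mpr ⟨ha0A, Nat.pos_of_ne_zero ha0⟩)
      set E := c.zip c.tail with hE
      have hEP : ∀ p ∈ E, p ∈ P := chainZipMem hchain
      have hEA : ∀ p ∈ E, p ∈ A := fun p hp => hPA p (hEP p hp)
      have hEnd : E.Nodup := by
        refine List.Nodup.of_map Prod.fst ?_
        rw [hE, mapFstZipTail]
        exact hnd
      have hind : ∀ a, (if a ∈ E then 1 else 0) ≤ F a := by
        intro a
        split
        · exact hPF a (hEP a ‹_›)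
        · exact Nat.zero_le _
      have hcntfst : ∀ v : α, E.countP (fun a => decide (a.1 = v)) = c.dropLast.count v := by
        intro v
        rw [← mapFstZipTail c, ← hE, List.count_eq_countP, List.countP_map]
        congr 1
      have hcntsnd : ∀ v : α, E.countP (fun a => decide (a.2 = v)) = c.tail.count v := by
        intro v
        have hms : E.map Prod.snd = c.tail :=
          List.map_snd_zip (l₁ := c) (l₂ := c.tail) (by simp [List.length_tail])
        rw [← hms, List.count_eq_countP, List.countP_map]
        congr 1
      have hcount : ∀ v : α,
          ∑ a ∈ A.filter (fun a => a.1 = v), (if a ∈ E then 1 else 0) =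
          ∑ a ∈ A.filter (fun a => a.2 = v), (if a ∈ E then 1 else 0) := by
        intro v
        have h1 := sumIndicator A (fun a => a.1 = v) E hEnd hEA
        have h2 := sumIndicator A (fun a => a.2 = v) E hEnd hEA
        have h3 : E.countP (fun a => decide (a.1 = v)) =
            E.countP (fun a => decide (a.2 = v)) := by
          rw [hcntfst v, hcntsnd v]; exact countDropLastTail c hcyc v
        convert h1.trans (h3.trans h2.symm) using 3
      have hcons' : ∀ v : α,
          ∑ a ∈ A.filter (fun a => a.1 = v), (F a - (if a ∈ E then 1 else 0)) =
          ∑ a ∈ A.filter (fun a => a.2 = v), (F a - (if a ∈ E then 1 else 0)) := by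
        intro v
        have e1 := Finset.sum_tsub_distrib (A.filter (fun a => a.1 = v))
          (fun i _ => hind i)
        have e2 := Finset.sum_tsub_distrib (A.filter (fun a => a.2 = v))
          (fun i _ => hind i)
        rw [e1, e2, hcons v, hcount v]
      have hEne : E ≠ [] := by
        rw [hE]
        intro hcon
        have := congrArg List.length hcon
        simp [List.length_zip, List.length_tail] at this
        omega
      obtain ⟨e, he⟩ := List.exists_mem_of_ne_nil E hEne
      have hlt : ∑ a ∈ A, (F a - (if a ∈ E then 1 else 0)) < N := by
        have h1 : ∑ a ∈ A, (F a - (if a ∈ E then 1 else 0)) =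
            ∑ a ∈ A, F a - ∑ a ∈ A, (if a ∈ E then 1 else 0) :=
          Finset.sum_tsub_distrib A (fun i _ => hind i)
        have h2 : 1 ≤ ∑ a ∈ A, (if a ∈ E then 1 else 0) := by
          refine le_trans (by simp [he]) (single_le_sum (fun i _ => Nat.zero_le _) (hEA e he))
        have h3 : ∑ a ∈ A, (if a ∈ E then 1 else 0) ≤ ∑ a ∈ A, F a :=
          sum_le_sum fun i _ => hind i
        omega
      obtain ⟨M', hM'1, hM'2⟩ := ih _ hlt (fun a => F a - (if a ∈ E then 1 else 0)) rfl hcons'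
      refine ⟨c ::ₘ M', ?_, ?_⟩
      · intro d hd
        rcases Multiset.mem_cons.mp hd with h | h
        · subst h
          exact ⟨hlen, List.IsChain.imp (fun u v huv => hPA _ huv) hchain, hcyc, hnd⟩
        · exact hM'1 d h
      · intro a ha
        have hrec := hM'2 a ha
        simp only [Multiset.map_cons, Multiset.sum_cons]
        rw [← hrec]
        have h4 := hind a
        by_cases hmem : a ∈ E
        · simp only [← hE, hmem, if_true] at h4 ⊢
          omega
        · simp only [← hE, hmem, if_false] at h4 ⊢
          omega

/-- **Cycle decomposition of a circulation.**  If `F` assigns a natural number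
to every arc of a finite directed graph and flow conservation holds at every
vertex, then `F` decomposes into a finite multiset of directed cycles: for
every arc `a`, `F a` equals the number of cycles in the multiset (counted with
multiplicity) that contain `a`. -/
theorem circulation_decomposes_into_cycles
    {α : Type*} [Fintype α] [DecidableEq α]
    (A : Finset (α × α)) (F : α × α → ℕ)
    (hcons : ∀ v : α,
      ∑ a ∈ A.filter (fun a => a.1 = v), F a =
        ∑ a ∈ A.filter (fun a => a.2 = v), F a) :
    ∃ M : Multiset (List α),
      (∀ c ∈ M, IsCycleIn A c) ∧
      ∀ a ∈ A, F a = (M.map (fun c => if a ∈ c.zip c.tail then 1 else 0)).sum := by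
  exact circAux A (∑ a ∈ A, F a) F rfl hcons
end

section
/- Projection of a time-expanded coupled flow to the static network: let (f, F) be a pair of car and driver flows on the time-expanded network G^T satisfying the car source/sink constraints for z^0, z^T, the driver source/sink constraints for k drivers at the depot, flow conservation for both flows at all internal nodes, and the coupling constraint f(a) ≤ L·F(a) on every relocation arc. For each edge (v,v') ∈ E define f̄(v,v') = Σ_t f((v,t),(v',t+d(v,v'))) and F̄(v,v') = Σ_t F((v,t),(v',t+d(v,v'))), the sums taken over all corresponding relocation arcs. Then: (i) for every station v, the net outflow of f̄ at v equals z^0(v) − z^T(v); (ii) for every station v (including the depot), the net outflow of F̄ at v equals 0; (iii) f̄(v,v') ≤ L·F̄(v,v') for every edge; and (iv) Σ_{a ∈ A_L} C(a)·F(a) = Σ_{(v,v') ∈ E} d(v,v')·F̄(v,v'). -/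
open Finset

variable {V : Type*} [Fintype V] [DecidableEq V]

/-- The relocation arcs `A_L` of the time-expanded network `G^T`:
for each edge `(v,v') ∈ E` and each time `t` with `t + d(v,v') ≤ T`,
an arc from `(v,t)` to `(v', t + d(v,v'))`. -/
def relocArcs (E : Finset (V × V)) (d : V × V → ℕ) (T : ℕ) :
    Finset ((V × ℕ) × (V × ℕ)) :=
  ((Finset.univ ×ˢ Finset.range (T + 1)) ×ˢ
      (Finset.univ ×ˢ Finset.range (T + 1))).filter
    (fun a => (a.1.1, a.2.1) ∈ E ∧ a.2.2 = a.1.2 + d (a.1.1, a.2.1) ∧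
      a.1.2 + d (a.1.1, a.2.1) ≤ T)

/-- The holdover arcs `A_H` of the time-expanded network `G^T`:
for each station `v` and each `t ∈ {0,…,T-1}`, an arc from `(v,t)` to `(v,t+1)`. -/
def holdArcs (T : ℕ) : Finset ((V × ℕ) × (V × ℕ)) :=
  ((Finset.univ ×ˢ Finset.range (T + 1)) ×ˢ
      (Finset.univ ×ˢ Finset.range (T + 1))).filter
    (fun a => a.2.1 = a.1.1 ∧ a.2.2 = a.1.2 + 1 ∧ a.1.2 + 1 ≤ T)

/-- The arc set `A_T = A_H ∪ A_L` of the time-expanded network `G^T`. -/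
def arcs (E : Finset (V × V)) (d : V × V → ℕ) (T : ℕ) :
    Finset ((V × ℕ) × (V × ℕ)) :=
  holdArcs T ∪ relocArcs E d T

/-- The outflow of a flow `F` at a node `n` of `G^T`: the sum of `F` over the
arcs of `G^T` leaving `n`. -/
def outflow (E : Finset (V × V)) (d : V × V → ℕ) (T : ℕ)
    (F : (V × ℕ) × (V × ℕ) → ℕ) (n : V × ℕ) : ℕ :=
  ∑ a ∈ (arcs E d T).filter (fun a => a.1 = n), F a

/-- The inflow of a flow `F` at a node `n` of `G^T`: the sum of `F` over the
arcs of `G^T` entering `n`. -/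
def inflow (E : Finset (V × V)) (d : V × V → ℕ) (T : ℕ)
    (F : (V × ℕ) × (V × ℕ) → ℕ) (n : V × ℕ) : ℕ :=
  ∑ a ∈ (arcs E d T).filter (fun a => a.2 = n), F a

/-- The cost of an arc of `G^T`: a relocation arc corresponding to the edge
`(v,v')` costs `d(v,v')`; holdover arcs (same station) cost `0`. -/
def arcCost (d : V × V → ℕ) (a : (V × ℕ) × (V × ℕ)) : ℕ :=
  if a.1.1 = a.2.1 then 0 else d (a.1.1, a.2.1)

/-- The projection of a flow on the time-expanded network `G^T` to the static
network: for an edge `e = (v,v')`, the sum of the flow over all relocation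
arcs of `G^T` corresponding to `e`. -/
def lifted (E : Finset (V × V)) (d : V × V → ℕ) (T : ℕ)
    (f : (V × ℕ) × (V × ℕ) → ℕ) (e : V × V) : ℕ :=
  ∑ a ∈ (relocArcs E d T).filter (fun a => a.1.1 = e.1 ∧ a.2.1 = e.2), f a

section Aux

variable (E : Finset (V × V)) (d : V × V → ℕ) (T : ℕ)

lemma mem_relocArcs' {a : (V × ℕ) × (V × ℕ)} (ha : a ∈ relocArcs E d T) :
    (a.1.1, a.2.1) ∈ E ∧ a.2.2 = a.1.2 + d (a.1.1, a.2.1) ∧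
      a.1.2 + d (a.1.1, a.2.1) ≤ T := by
  simp only [relocArcs, Finset.mem_filter] at ha
  exact ha.2

lemma mem_holdArcs' {a : (V × ℕ) × (V × ℕ)} (ha : a ∈ holdArcs (V := V) T) :
    a.2.1 = a.1.1 ∧ a.2.2 = a.1.2 + 1 ∧ a.1.2 + 1 ≤ T := by
  simp only [holdArcs, Finset.mem_filter] at ha
  exact ha.2

lemma arcs_time {a : (V × ℕ) × (V × ℕ)} (ha : a ∈ arcs E d T) :
    a.1.2 ∈ Finset.range (T + 1) := by
  rw [arcs, Finset.mem_union] at ha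
  rcases ha with ha | ha
  · simp only [holdArcs, Finset.mem_filter, Finset.mem_product] at ha
    exact ha.1.1.2
  · simp only [relocArcs, Finset.mem_filter, Finset.mem_product] at ha
    exact ha.1.1.2

lemma arcs_time2 {a : (V × ℕ) × (V × ℕ)} (ha : a ∈ arcs E d T) :
    a.2.2 ∈ Finset.range (T + 1) := by
  rw [arcs, Finset.mem_union] at ha
  rcases ha with ha | ha
  · simp only [holdArcs, Finset.mem_filter, Finset.mem_product] at ha
    exact ha.1.2.2
  · simp only [relocArcs, Finset.mem_filter, Finset.mem_product] at ha
    exact ha.1.2.2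

lemma hold_disj (hE : ∀ e ∈ E, e.1 ≠ e.2) :
    Disjoint (holdArcs T : Finset ((V × ℕ) × (V × ℕ))) (relocArcs E d T) := by
  rw [Finset.disjoint_left]
  intro a ha hr
  exact hE _ (mem_relocArcs' E d T hr).1 ((mem_holdArcs' T ha).1.symm)

lemma sum_arcs_split (hE : ∀ e ∈ E, e.1 ≠ e.2) (g : (V × ℕ) × (V × ℕ) → ℕ)
    (p : (V × ℕ) × (V × ℕ) → Prop) [DecidablePred p] :
    ∑ a ∈ (arcs E d T).filter p, g a =
      ∑ a ∈ (holdArcs T).filter p, g a + ∑ a ∈ (relocArcs E d T).filter p, g a := by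
  rw [arcs, Finset.filter_union, Finset.sum_union
    (Finset.disjoint_filter_filter (hold_disj E d T hE))]

lemma reloc_out (g : (V × ℕ) × (V × ℕ) → ℕ) (v : V) :
    ∑ a ∈ (relocArcs E d T).filter (fun a => a.1.1 = v), g a =
      ∑ e ∈ E.filter (fun e => e.1 = v), lifted E d T g e := by
  have hmap : ∀ a ∈ (relocArcs E d T).filter (fun a => a.1.1 = v),
      (a.1.1, a.2.1) ∈ E.filter (fun e => e.1 = v) := by
    intro a ha
    rw [Finset.mem_filter] at ha ⊢
    exact ⟨(mem_relocArcs' E d T ha.1).1, ha.2⟩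
  rw [← Finset.sum_fiberwise_of_maps_to hmap g]
  apply Finset.sum_congr rfl
  intro e he
  rw [Finset.mem_filter] at he
  unfold lifted
  rw [Finset.filter_filter]
  apply Finset.sum_congr _ (fun _ _ => rfl)
  apply Finset.filter_congr
  intro a _
  simp only [Prod.ext_iff]
  constructor
  · rintro ⟨_, h2, h3⟩; exact ⟨h2, h3⟩
  · rintro ⟨h2, h3⟩; exact ⟨h2.trans he.2, h2, h3⟩

lemma reloc_in (g : (V × ℕ) × (V × ℕ) → ℕ) (v : V) :
    ∑ a ∈ (relocArcs E d T).filter (fun a => a.2.1 = v), g a =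
      ∑ e ∈ E.filter (fun e => e.2 = v), lifted E d T g e := by
  have hmap : ∀ a ∈ (relocArcs E d T).filter (fun a => a.2.1 = v),
      (a.1.1, a.2.1) ∈ E.filter (fun e => e.2 = v) := by
    intro a ha
    rw [Finset.mem_filter] at ha ⊢
    exact ⟨(mem_relocArcs' E d T ha.1).1, ha.2⟩
  rw [← Finset.sum_fiberwise_of_maps_to hmap g]
  apply Finset.sum_congr rfl
  intro e he
  rw [Finset.mem_filter] at he
  unfold lifted
  rw [Finset.filter_filter]
  apply Finset.sum_congr _ (fun _ _ => rfl)
  apply Finset.filter_congr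
  intro a _
  simp only [Prod.ext_iff]
  constructor
  · rintro ⟨_, h2, h3⟩; exact ⟨h2, h3⟩
  · rintro ⟨h2, h3⟩; exact ⟨h3.trans he.2, h2, h3⟩

lemma hold_out_eq_in (g : (V × ℕ) × (V × ℕ) → ℕ) (v : V) :
    ∑ a ∈ (holdArcs T : Finset ((V × ℕ) × (V × ℕ))).filter (fun a => a.1.1 = v), g a =
      ∑ a ∈ (holdArcs T : Finset ((V × ℕ) × (V × ℕ))).filter (fun a => a.2.1 = v), g a := by
  apply Finset.sum_congr _ (fun _ _ => rfl)
  apply Finset.filter_congr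
  intro a ha
  rw [(mem_holdArcs' T ha).1]

lemma sum_outflow (g : (V × ℕ) × (V × ℕ) → ℕ) (v : V) :
    ∑ t ∈ Finset.range (T + 1), outflow E d T g (v, t) =
      ∑ a ∈ (arcs E d T).filter (fun a => a.1.1 = v), g a := by
  rw [← Finset.sum_fiberwise_of_maps_to (g := fun a => a.1.2)
    (fun a ha => arcs_time E d T (Finset.mem_filter.mp ha).1) g]
  apply Finset.sum_congr rfl
  intro t _
  unfold outflow
  rw [Finset.filter_filter]
  apply Finset.sum_congr _ (fun _ _ => rfl)
  apply Finset.filter_congr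
  intro a _
  simp [Prod.ext_iff, and_comm]

lemma sum_inflow (g : (V × ℕ) × (V × ℕ) → ℕ) (v : V) :
    ∑ t ∈ Finset.range (T + 1), inflow E d T g (v, t) =
      ∑ a ∈ (arcs E d T).filter (fun a => a.2.1 = v), g a := by
  rw [← Finset.sum_fiberwise_of_maps_to (g := fun a => a.2.2)
    (fun a ha => arcs_time2 E d T (Finset.mem_filter.mp ha).1) g]
  apply Finset.sum_congr rfl
  intro t _
  unfold inflow
  rw [Finset.filter_filter]
  apply Finset.sum_congr _ (fun _ _ => rfl)
  apply Finset.filter_congr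
  intro a _
  simp [Prod.ext_iff, and_comm]

lemma outflow_at_T (hd : ∀ e ∈ E, 1 ≤ d e) (g : (V × ℕ) × (V × ℕ) → ℕ) (v : V) :
    outflow E d T g (v, T) = 0 := by
  unfold outflow
  rw [Finset.filter_eq_empty_iff.mpr, Finset.sum_empty]
  intro a ha h
  have ht : a.1.2 = T := by rw [h]
  rw [arcs, Finset.mem_union] at ha
  rcases ha with ha | ha
  · have := (mem_holdArcs' T ha).2.2
    omega
  · obtain ⟨hm, _, hle⟩ := mem_relocArcs' E d T ha
    have := hd _ hm
    omega

lemma inflow_at_0 (hd : ∀ e ∈ E, 1 ≤ d e) (g : (V × ℕ) × (V × ℕ) → ℕ) (v : V) :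
    inflow E d T g (v, 0) = 0 := by
  unfold inflow
  rw [Finset.filter_eq_empty_iff.mpr, Finset.sum_empty]
  intro a ha h
  have ht : a.2.2 = 0 := by rw [h]
  rw [arcs, Finset.mem_union] at ha
  rcases ha with ha | ha
  · have := (mem_holdArcs' T ha).2.1
    omega
  · obtain ⟨hm, heq, _⟩ := mem_relocArcs' E d T ha
    have := hd _ hm
    omega

lemma telescope (hd : ∀ e ∈ E, 1 ≤ d e) (g : (V × ℕ) × (V × ℕ) → ℕ) (v : V)
    (hcons : ∀ t, 0 < t → t < T → outflow E d T g (v, t) = inflow E d T g (v, t)) :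
    (∑ t ∈ Finset.range (T + 1), (outflow E d T g (v, t) : ℤ)) -
      ∑ t ∈ Finset.range (T + 1), (inflow E d T g (v, t) : ℤ) =
      (outflow E d T g (v, 0) : ℤ) - inflow E d T g (v, T) := by
  rw [← Finset.sum_sub_distrib]
  have key : ∀ t ∈ Finset.range (T + 1),
      (outflow E d T g (v, t) : ℤ) - inflow E d T g (v, t) =
      (if t = 0 then (outflow E d T g (v, 0) : ℤ) else 0) -
        (if t = T then (inflow E d T g (v, T) : ℤ) else 0) := by
    intro t ht
    rw [Finset.mem_range] at ht
    rcases eq_or_ne t 0 with rfl | h0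
    · rw [if_pos rfl, inflow_at_0 E d T hd g v]
      rcases eq_or_ne (0 : ℕ) T with h | hT
      · rw [if_pos h]
        have hz : inflow E d T g (v, T) = 0 := by
          rw [← h]; exact inflow_at_0 E d 0 hd g v
        rw [hz]
      · rw [if_neg hT]
        simp
    · rcases eq_or_ne t T with h | hT
      · have hT0 : ¬ T = 0 := by omega
        rw [h, if_neg hT0, if_pos rfl, outflow_at_T E d T hd g v]
        simp
      · rw [if_neg h0, if_neg hT, hcons t (Nat.pos_of_ne_zero h0) (by omega)]
        ring
  rw [Finset.sum_congr rfl key, Finset.sum_sub_distrib,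
    Finset.sum_ite_eq' (Finset.range (T + 1)) 0
      (fun _ => (outflow E d T g (v, 0) : ℤ)),
    Finset.sum_ite_eq' (Finset.range (T + 1)) T
      (fun _ => (inflow E d T g (v, T) : ℤ)),
    if_pos (by simp), if_pos (by simp)]

lemma net (hE : ∀ e ∈ E, e.1 ≠ e.2) (hd : ∀ e ∈ E, 1 ≤ d e)
    (g : (V × ℕ) × (V × ℕ) → ℕ) (v : V)
    (hcons : ∀ t, 0 < t → t < T → outflow E d T g (v, t) = inflow E d T g (v, t)) :
    (∑ e ∈ E.filter (fun e => e.1 = v), (lifted E d T g e : ℤ)) -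
      ∑ e ∈ E.filter (fun e => e.2 = v), (lifted E d T g e : ℤ) =
      (outflow E d T g (v, 0) : ℤ) - inflow E d T g (v, T) := by
  have hOut : ∑ t ∈ Finset.range (T + 1), outflow E d T g (v, t) =
      (∑ a ∈ (holdArcs T : Finset ((V × ℕ) × (V × ℕ))).filter
          (fun a => a.1.1 = v), g a) +
        ∑ e ∈ E.filter (fun e => e.1 = v), lifted E d T g e := by
    rw [sum_outflow, sum_arcs_split E d T hE, reloc_out]
  have hIn : ∑ t ∈ Finset.range (T + 1), inflow E d T g (v, t) =
      (∑ a ∈ (holdArcs T : Finset ((V × ℕ) × (V × ℕ))).filter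
          (fun a => a.1.1 = v), g a) +
        ∑ e ∈ E.filter (fun e => e.2 = v), lifted E d T g e := by
    rw [sum_inflow, sum_arcs_split E d T hE, reloc_in, hold_out_eq_in]
  have htel := telescope E d T hd g v hcons
  have hO := congrArg (Nat.cast : ℕ → ℤ) hOut
  push_cast at hO
  have hI := congrArg (Nat.cast : ℕ → ℤ) hIn
  push_cast at hI
  rw [hO, hI] at htel
  linarith

end Aux

/-- **Projection of a time-expanded coupled flow to the static network.**
If `(f, F)` is a coupled pair of car and driver flows on `G^T` (sources/sinks
`z^0`, `z^T` for cars, `k` drivers at the depot, conservation at internal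
nodes, coupling `f ≤ L·F` on relocation arcs), then the projections `f̄`, `F̄`
satisfy: (i) the net outflow of `f̄` at every station `v` is `z^0(v) − z^T(v)`;
(ii) the net outflow of `F̄` at every station is `0`; (iii) `f̄ ≤ L·F̄` on every
edge; (iv) `Σ_{a ∈ A_L} C(a)·F(a) = Σ_{(v,v') ∈ E} d(v,v')·F̄(v,v')`. -/
theorem projection_of_time_expanded_coupled_flow
    (E : Finset (V × V)) (d : V × V → ℕ) (T k L : ℕ) (v0 : V)
    (hE : ∀ e ∈ E, e.1 ≠ e.2) (hd : ∀ e ∈ E, 1 ≤ d e) (hL : 1 ≤ L)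
    (z0 zT : V → ℕ) (f F : (V × ℕ) × (V × ℕ) → ℕ)
    (hcar_src : ∀ v : V, outflow E d T f (v, 0) = z0 v)
    (hcar_sink : ∀ v : V, inflow E d T f (v, T) = zT v)
    (hcar_cons : ∀ (v : V) (t : ℕ), 0 < t → t < T →
      outflow E d T f (v, t) = inflow E d T f (v, t))
    (hdrv_src : outflow E d T F (v0, 0) = k)
    (hdrv_src0 : ∀ v : V, v ≠ v0 → outflow E d T F (v, 0) = 0)
    (hdrv_sink : inflow E d T F (v0, T) = k)
    (hdrv_sink0 : ∀ v : V, v ≠ v0 → inflow E d T F (v, T) = 0)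
    (hdrv_cons : ∀ (v : V) (t : ℕ), 0 < t → t < T →
      outflow E d T F (v, t) = inflow E d T F (v, t))
    (hcouple : ∀ a ∈ relocArcs E d T, f a ≤ L * F a) :
    (∀ v : V,
      (∑ e ∈ E.filter (fun e => e.1 = v), (lifted E d T f e : ℤ)) -
        ∑ e ∈ E.filter (fun e => e.2 = v), (lifted E d T f e : ℤ) =
        (z0 v : ℤ) - zT v) ∧
    (∀ v : V,
      (∑ e ∈ E.filter (fun e => e.1 = v), (lifted E d T F e : ℤ)) -
        ∑ e ∈ E.filter (fun e => e.2 = v), (lifted E d T F e : ℤ) = 0) ∧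
    (∀ e ∈ E, lifted E d T f e ≤ L * lifted E d T F e) ∧
    ∑ a ∈ relocArcs E d T, arcCost d a * F a =
      ∑ e ∈ E, d e * lifted E d T F e := by
  refine ⟨?_, ?_, ?_, ?_⟩
  · intro v
    rw [net E d T hE hd f v (fun t => hcar_cons v t), hcar_src, hcar_sink]
  · intro v
    rw [net E d T hE hd F v (fun t => hdrv_cons v t)]
    rcases eq_or_ne v v0 with rfl | hv
    · rw [hdrv_src, hdrv_sink]; ring
    · rw [hdrv_src0 v hv, hdrv_sink0 v hv]; ring
  · intro e he
    unfold lifted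
    rw [Finset.mul_sum]
    apply Finset.sum_le_sum
    intro a ha
    exact hcouple a (Finset.mem_filter.mp ha).1
  · have hmap : ∀ a ∈ relocArcs E d T, (a.1.1, a.2.1) ∈ E :=
      fun a ha => (mem_relocArcs' E d T ha).1
    rw [← Finset.sum_fiberwise_of_maps_to hmap (fun a => arcCost d a * F a)]
    apply Finset.sum_congr rfl
    intro e he
    rw [show (relocArcs E d T).filter (fun a => (a.1.1, a.2.1) = e)
        = (relocArcs E d T).filter (fun a => a.1.1 = e.1 ∧ a.2.1 = e.2) by
      apply Finset.filter_congr; intro a _; simp [Prod.ext_iff]]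
    simp only [lifted, Finset.mul_sum]
    apply Finset.sum_congr rfl
    intro a ha
    rw [Finset.mem_filter] at ha
    obtain ⟨ha1, h1, h2⟩ := ha
    have hne : a.1.1 ≠ a.2.1 := hE _ (mem_relocArcs' E d T ha1).1
    rw [arcCost, if_neg hne]
    congr 1
    exact congrArg d (Prod.ext h1 h2)
end
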